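/- arXiv:2004.02252 — 2 statements merged into one kernel-verified Lean document; each statement's English description precedes it below -/
import Mathlib

section
/- Let (R, m, k) be a one-dimensional Cohen–Macaulay local ring with infinite residue field admitting a canonical module ω_R with R ⊆ ω_R ⊆ R̄, and assume R is not Gorenstein. Then R:ω_R = m:ω_R, and moreover R:ω_R is a module over the ring B = m:m. -/
/- Common definitions: fractional ideals in the total ring of fractions, canonical
ideals (via the Herzog–Kunz criterion), reductions, (almost) canonical ideals and
(almost) Gorenstein rings, for one-dimensional Cohen–Macaulay rings.
Throughout, the total ring of fractions `Q(R)` is `FractionRing R` and fractional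
ideals are submodules of it. -/

set_option maxHeartbeats 1600000
set_option synthInstance.maxHeartbeats 800000

noncomputable section

open IsLocalRing Submodule

/-- The `Localization S`-algebra structure on `A[S⁻¹]` (an instance in the older Mathlib). -/
noncomputable instance localizedModuleAlgebra {R : Type*} [CommSemiring R] {S : Submonoid R}
    {A : Type*} [Semiring A] [Algebra R A] : Algebra (Localization S) (LocalizedModule S A) :=
  Algebra.ofModule
    (fun r x y => by
      induction r using Localization.induction_on with | H r => ?_
      induction x using LocalizedModule.induction_on with | h a t => ?_
      induction y using LocalizedModule.induction_on with | h b u => ?_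
      rw [LocalizedModule.mk_smul_mk, LocalizedModule.mk_mul_mk, LocalizedModule.mk_mul_mk,
        LocalizedModule.mk_smul_mk, smul_mul_assoc, mul_assoc])
    (fun r x y => by
      induction r using Localization.induction_on with | H r => ?_
      induction x using LocalizedModule.induction_on with | h a t => ?_
      induction y using LocalizedModule.induction_on with | h b u => ?_
      rw [LocalizedModule.mk_smul_mk, LocalizedModule.mk_mul_mk, LocalizedModule.mk_mul_mk,
        LocalizedModule.mk_smul_mk, mul_smul_comm, mul_left_comm])

variable (T A : Type*) [CommRing T] [CommRing A] [Algebra T A]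

/-- The submodule of the `T`-algebra `A` generated by the image of an ideal of `T`. -/
def idealSub (I : Ideal T) : Submodule T A := Submodule.map (Algebra.linearMap T A) I

/-- The maximal ideal of the local ring `T`, viewed inside `A`. -/
def maxSub [IsLocalRing T] : Submodule T A := idealSub T A (maximalIdeal T)

/-- The Jacobson radical of `T`, viewed inside `A`. -/
def jacSub : Submodule T A := Submodule.map (Algebra.linearMap T A) ((⊥ : Ideal T).jacobson)

/-- The integral closure of `T` in `A`, as a submodule of `A`. -/
def intCl : Submodule T A := Subalgebra.toSubmodule (integralClosure T A)

/-- `I` is a fractional ideal of `T` inside `A` (`A` playing the role of the total ring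
of fractions of `T`): `I` contains an invertible element and has bounded denominators. -/
def IsFracIdeal (I : Submodule T A) : Prop :=
  (∃ u : Aˣ, (u : A) ∈ I) ∧ ∃ r ∈ nonZeroDivisors T, ∀ x ∈ I, r • x ∈ (1 : Submodule T A)

/-- The length `ℓ_T(N/I)` of the subquotient `N/(I ∩ N)`, defined as the Krull dimension
of its lattice of submodules. -/
def relLength (I N : Submodule T A) : WithBot ℕ∞ :=
  Order.krullDim (Submodule T (↥N ⧸ (I.comap N.subtype)))

/-- Herzog–Kunz criterion: a fractional ideal `ω` of `T` is a canonical module of `T` iff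
`ℓ_T((ω : n)/ω) = 1` for every maximal ideal `n` of `T`. -/
def IsCanonicalIdeal (ω : Submodule T A) : Prop :=
  IsFracIdeal T A ω ∧ ∀ n : Ideal T, n.IsMaximal → relLength T A ω (ω / idealSub T A n) = 1

/-- `z ∈ J` is a reduction of the fractional ideal `J`: `z J^n = J^{n+1}` for some `n`. -/
def IsReductionOf (z : A) (J : Submodule T A) : Prop :=
  z ∈ J ∧ ∃ n : ℕ, J ^ (n + 1) = span T {z} * J ^ n

/-- Almost canonical ideal over a local ring `T` (with respect to a canonical module `ω`,
`T ⊆ ω ⊆ T̄`): for a (regular) reduction `z` of `ω : I` one has `ω : (m:m) ⊆ zI`. -/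
def IsAlmostCanonicalLoc [IsLocalRing T] (ω I : Submodule T A) : Prop :=
  ∃ z : A, IsUnit z ∧ IsReductionOf T A z (ω / I) ∧
    ω / (maxSub T A / maxSub T A) ≤ span T {z} * I

/-- Almost canonical ideal over a (not necessarily local) ring: the localization at every
maximal ideal is an almost canonical ideal of the localized ring. -/
def IsAlmostCanonical (ω I : Submodule T A) : Prop :=
  ∀ (p : Ideal T) (hp : p.IsMaximal),
    letI := hp.isPrime
    IsAlmostCanonicalLoc (Localization.AtPrime p) (LocalizedModule p.primeCompl A)
      (ω.localized p.primeCompl) (I.localized p.primeCompl)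

/-- `S` is a discrete valuation ring. -/
def IsDVR (S : Type*) [CommRing S] : Prop :=
  ∃ h : IsDomain S, @IsDiscreteValuationRing S _ h

/-- A one-dimensional Cohen–Macaulay local ring `S` is almost Gorenstein if `m ω ⊆ m`
for a canonical module `S ⊆ ω ⊆ S̄` of `S`. -/
def IsAlmostGorensteinLoc (S : Type*) [CommRing S] [IsLocalRing S] : Prop :=
  ∃ ω : Submodule S (FractionRing S),
    IsCanonicalIdeal S (FractionRing S) ω ∧ 1 ≤ ω ∧
      ω ≤ intCl S (FractionRing S) ∧
      maxSub S (FractionRing S) * ω ≤ maxSub S (FractionRing S)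

/-- A ring is almost Gorenstein if its localization at every maximal ideal is. -/
def IsAlmostGorenstein (S : Type*) [CommRing S] : Prop :=
  ∀ (p : Ideal S) (hp : p.IsMaximal),
    letI := hp.isPrime
    IsAlmostGorensteinLoc (Localization.AtPrime p)

/-- A minimal system of generators of the maximal ideal of a local ring. -/
def IsMinGenSys (S : Type*) [CommRing S] [IsLocalRing S] {n : ℕ} (g : Fin n → S) : Prop :=
  Ideal.span (Set.range g) = maximalIdeal S ∧
    ∀ i : Fin n, Ideal.span (g '' {j | j ≠ i}) ≠ maximalIdeal S

/-- `R` is a generalized almost Gorenstein local (gAGL) ring, with respect to the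
canonical module `ω` and the ring `B = m:m`: `m ω J(B) ⊆ R`. -/
def IsGAGL (R : Type*) [CommRing R] [IsLocalRing R] (ω : Submodule R (FractionRing R))
    (B : Subalgebra R (FractionRing R)) : Prop :=
  maxSub R (FractionRing R) * ω *
      ((jacSub ↥B (FractionRing R)).restrictScalars R) ≤ 1

/-- `1` is a reduction of the localization `J_p` of the fractional ideal `J` at the
submonoid `p` (for `p` the complement of a maximal ideal, this is the localization of
`J` at that maximal ideal): `1 ∈ J_p` and `(J_p)^{n+1} = (J_p)^n` for some `n`. -/
def IsOneReductionOfLocalization (p : Submonoid T) (J : Submodule T A) : Prop :=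
  (1 : LocalizedModule p A) ∈ J.localized p ∧
    ∃ n : ℕ, (J.localized p) ^ (n + 1) = (J.localized p) ^ n

/-- Injective integral extensions are local homomorphisms; apply this to `R → R̄ ⊆ A`. -/
theorem IsIntegral.isUnit_of_algebraMap_mul_eq {R A : Type*} [CommRing R] [CommRing A]
    [Algebra R A] [FaithfulSMul R A] {t u : R} {z : A} (hz : IsIntegral R z) (hu : IsUnit u)
    (h : algebraMap R A t * z = algebraMap R A u) : IsUnit t := by
  let S := integralClosure R A
  have hinj : Function.Injective (algebraMap R S) := fun a b hab ↦
    FaithfulSMul.algebraMap_injective R A (congrArg Subtype.val hab)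
  have : IsLocalHom (algebraMap R S) :=
    (algebraMap_isIntegral_iff.mpr inferInstance).isLocalHom hinj
  have hS : algebraMap R S t * ⟨z, hz⟩ = algebraMap R S u := Subtype.ext h
  exact (isUnit_map_iff (algebraMap R S) t).mp
    (isUnit_of_mul_isUnit_left (hS ▸ hu.map (algebraMap R S)))

section FractionalIdeal

variable {R A : Type*} [CommRing R] [IsLocalRing R] [CommRing A] [Algebra R A]

theorem maxSub_le_one : maxSub R A ≤ 1 := by
  rintro _ ⟨r, -, rfl⟩
  exact mem_one.mpr ⟨r, rfl⟩

theorem mul_mem_maxSub_of_mem_one_div [FaithfulSMul R A] {ω : Submodule R A} (hω1 : 1 ≤ ω)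
    (hω2 : ω ≤ intCl R A) (hω : ω ≠ 1) {y z : A} (hy : y ∈ 1 / ω) (hz : z ∈ ω) :
    y * z ∈ maxSub R A := by
  obtain ⟨r, hr⟩ := mem_one.mp (hy z hz)
  by_cases hrm : r ∈ maximalIdeal R
  · exact ⟨r, hrm, hr⟩
  -- Otherwise `y = y * 1 ∈ R` times `z ∈ R̄` is a unit of `R`, so `y` is a unit and `ω ⊆ y⁻¹R = R`.
  obtain ⟨t, ht⟩ := mem_one.mp (mul_one y ▸ hy 1 (hω1 (one_le.mp le_rfl)))
  have htu : IsUnit t := (hω2 hz).isUnit_of_algebraMap_mul_eq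
    (notMem_maximalIdeal.mp hrm) (by rw [ht, hr])
  refine absurd (le_antisymm (fun w hw ↦ ?_) hω1) hω
  obtain ⟨s, hs⟩ := mem_one.mp (hy w hw)
  refine mem_one.mpr ⟨htu.unit⁻¹ * s, ?_⟩
  rw [map_mul, hs, ← ht, ← mul_assoc, ← map_mul, IsUnit.val_inv_mul, map_one, one_mul]

theorem one_div_eq_maxSub_div [FaithfulSMul R A] {ω : Submodule R A} (hω1 : 1 ≤ ω)
    (hω2 : ω ≤ intCl R A) (hω : ω ≠ 1) : 1 / ω = maxSub R A / ω :=
  le_antisymm (fun _ hy _ hz ↦ mul_mem_maxSub_of_mem_one_div hω1 hω2 hω hy hz)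
    (fun _ hy _ hz ↦ maxSub_le_one (hy _ hz))

end FractionalIdeal

theorem Submodule.mul_mem_div_of_mem_div_self {R A : Type*} [CommSemiring R] [CommSemiring A]
    [Algebra R A] {I J : Submodule R A} {b y : A} (hb : b ∈ I / I) (hy : y ∈ I / J) :
    b * y ∈ I / J := fun z hz ↦ mul_assoc b y z ▸ hb _ (hy z hz)

theorem stmt6_general (R : Type*) [CommRing R] [IsLocalRing R]
    (ω : Submodule R (FractionRing R))
    (hω1 : 1 ≤ ω)
    (hω2 : ω ≤ intCl R (FractionRing R))
    (hnotGor : ω ≠ 1) :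
    (1 : Submodule R (FractionRing R)) / ω = maxSub R (FractionRing R) / ω ∧
      ∀ b ∈ maxSub R (FractionRing R) / maxSub R (FractionRing R),
        ∀ y ∈ (1 : Submodule R (FractionRing R)) / ω,
          b * y ∈ (1 : Submodule R (FractionRing R)) / ω := by
  have h := one_div_eq_maxSub_div hω1 hω2 hnotGor
  refine ⟨h, fun b hb y hy ↦ ?_⟩
  rw [h] at hy ⊢
  exact mul_mem_div_of_mem_div_self hb hy

/-- Remark `R:omega`: if `R` is not Gorenstein then `R:ω = m:ω` and
`R:ω` is a module over `B = m:m`. (Since `R ⊆ ω ⊆ R̄`, `R` is Gorenstein exactly when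
`ω = R`.) -/
theorem stmt6 (R : Type*) [CommRing R] [IsLocalRing R] [IsNoetherianRing R]
    (hdim : ringKrullDim R = 1)
    (hCM : ∃ x ∈ maximalIdeal R, x ∈ nonZeroDivisors R)
    (hres : Infinite (ResidueField R))
    (ω : Submodule R (FractionRing R))
    (hω : IsCanonicalIdeal R (FractionRing R) ω) (hω1 : 1 ≤ ω)
    (hω2 : ω ≤ intCl R (FractionRing R))
    (hnotGor : ω ≠ 1) :
    (1 : Submodule R (FractionRing R)) / ω = maxSub R (FractionRing R) / ω ∧
      ∀ b ∈ maxSub R (FractionRing R) / maxSub R (FractionRing R),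
        ∀ y ∈ (1 : Submodule R (FractionRing R)) / ω,
          b * y ∈ (1 : Submodule R (FractionRing R)) / ω :=
  stmt6_general R ω hω1 hω2 hnotGor
end
end

section
/- Let (R, m, k) be a one-dimensional Cohen–Macaulay local ring with infinite residue field admitting a canonical module ω_R with R ⊆ ω_R ⊆ R̄. If α ∈ m satisfies α m = m² and R is not almost Gorenstein, then α ∉ R:ω_R. -/
/- Common definitions: fractional ideals in the total ring of fractions, canonical
ideals (via the Herzog–Kunz criterion), reductions, (almost) canonical ideals and
(almost) Gorenstein rings, for one-dimensional Cohen–Macaulay rings.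
Throughout, the total ring of fractions `Q(R)` is `FractionRing R` and fractional
ideals are submodules of it. -/

set_option maxHeartbeats 1600000
set_option synthInstance.maxHeartbeats 800000

noncomputable section

open IsLocalRing Submodule

/-- The `Localization S`-algebra structure on `LocalizedModule S A` (a global instance,
`LocalizedModule.algebra`, in older Mathlib). -/
noncomputable instance localizedModuleAlgebraLoc {R₀ A₀ : Type*} [CommRing R₀] [CommRing A₀]
    [Algebra R₀ A₀] (S : Submonoid R₀) : Algebra (Localization S) (LocalizedModule S A₀) :=
  Algebra.ofModule
    (fun x p q => by
      induction x using Localization.induction_on with | H x => _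
      induction p, q using LocalizedModule.induction_on₂ with | _ a s b t => _
      obtain ⟨r, u⟩ := x
      simp only [LocalizedModule.mk_smul_mk, LocalizedModule.mk_mul_mk, smul_mul_assoc, mul_assoc])
    (fun x p q => by
      induction x using Localization.induction_on with | H x => _
      induction p, q using LocalizedModule.induction_on₂ with | _ a s b t => _
      obtain ⟨r, u⟩ := x
      simp only [LocalizedModule.mk_smul_mk, LocalizedModule.mk_mul_mk, mul_smul_comm, mul_left_comm])

variable (T A : Type*) [CommRing T] [CommRing A] [Algebra T A]

/- Suppose `α ω ⊆ R`. No element of `α ω` is a unit of `R`, since then `α⁻¹` would lie in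
`ω ⊆ R̄`, while an element of `m` cannot have an integral inverse (Nakayama on `R[α⁻¹]`);
so `α ω ⊆ m`.
Then for `a ∈ m`, `w ∈ ω` we get `α (a w) ∈ m² = α m`, and cancelling the nonzerodivisor `α`
gives `a w ∈ m`, i.e. `R` is almost Gorenstein. -/

open scoped nonZeroDivisors

section

variable {R A : Type*} [CommRing R] [IsLocalRing R] [CommRing A] [Algebra R A]

theorem IsLocalRing.isUnit_of_isIntegral_of_mul_algebraMap_eq_one [Nontrivial A] {α : R}
    {γ : A} (hγ : IsIntegral R γ) (h : γ * algebraMap R A α = 1) : IsUnit α := by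
  by_contra hα
  set N : Submodule R A := Subalgebra.toSubmodule (Algebra.adjoin R {γ})
  have hle : N ≤ maximalIdeal R • N := by
    intro n hn
    have hγn : γ * n ∈ N :=
      (Algebra.adjoin R {γ}).mul_mem (Algebra.self_mem_adjoin_singleton R γ) hn
    have hn_eq : n = α • (γ * n) := by
      rw [Algebra.smul_def, ← mul_assoc, mul_comm _ γ, h, one_mul]
    rw [hn_eq]
    exact Submodule.smul_mem_smul hα hγn
  have hN : N = ⊥ :=
    Submodule.eq_bot_of_le_smul_of_le_jacobson_bot (maximalIdeal R) N hγ.fg_adjoin_singleton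
      hle (jacobson_eq_maximalIdeal ⊥ bot_ne_top).ge
  have h1 : (1 : A) ∈ N := (Algebra.adjoin R {γ}).one_mem
  rw [hN, Submodule.mem_bot] at h1
  exact one_ne_zero h1

theorem algebraMap_mul_mem_maxSub_of_mem_one [Nontrivial A] {α : R} (hα : α ∈ maximalIdeal R)
    {w : A} (hw : IsIntegral R w) (h : algebraMap R A α * w ∈ (1 : Submodule R A)) :
    algebraMap R A α * w ∈ maxSub R A := by
  obtain ⟨r, hr⟩ := Submodule.mem_one.mp h
  refine ⟨r, ?_, hr⟩
  by_contra hr_mem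
  obtain ⟨u, rfl⟩ := of_not_not ((mem_maximalIdeal r).not.mp hr_mem)
  have hunit : IsUnit α := by
    refine isUnit_of_isIntegral_of_mul_algebraMap_eq_one
      (hw.mul (isIntegral_algebraMap (x := ((u⁻¹ : Rˣ) : R)))) ?_
    calc w * algebraMap R A ↑u⁻¹ * algebraMap R A α
        = algebraMap R A ↑u⁻¹ * (algebraMap R A α * w) := by ring
      _ = 1 := by rw [← hr, ← map_mul, Units.inv_mul, map_one]
  exact (mem_maximalIdeal α).mp hα hunit

theorem mem_nonZeroDivisors_of_span_singleton_mul_maximalIdeal_eq_sq {α : R}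
    (hreg : ∃ x ∈ maximalIdeal R, x ∈ R⁰)
    (hα : Ideal.span {α} * maximalIdeal R = maximalIdeal R ^ 2) : α ∈ R⁰ := by
  obtain ⟨x, hxm, hxreg⟩ := hreg
  have hx2 : x ^ 2 ∈ Ideal.span {α} * maximalIdeal R := hα ▸ Ideal.pow_mem_pow hxm 2
  obtain ⟨y, -, hy⟩ := Ideal.mem_span_singleton_mul.mp hx2
  exact (mul_mem_nonZeroDivisors.mp (hy ▸ pow_mem hxreg 2)).1

theorem maxSub_mul_le_maxSub_of_forall_algebraMap_mul_mem {α : R}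
    (hαA : algebraMap R A α ∈ A⁰)
    (hα : Ideal.span {α} * maximalIdeal R = maximalIdeal R ^ 2) {ω : Submodule R A}
    (hω : ∀ w ∈ ω, algebraMap R A α * w ∈ maxSub R A) :
    maxSub R A * ω ≤ maxSub R A := by
  rw [Submodule.mul_le]
  rintro _ ⟨a, ha, rfl⟩ w hw
  obtain ⟨r, hr, hrw⟩ := hω w hw
  have har : a * r ∈ Ideal.span {α} * maximalIdeal R := hα ▸ pow_two (maximalIdeal R) ▸
    Ideal.mul_mem_mul ha hr
  obtain ⟨s, hs, hsar⟩ := Ideal.mem_span_singleton_mul.mp har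
  refine ⟨s, hs, mul_cancel_left_mem_nonZeroDivisors hαA |>.mp ?_⟩
  simp only [Algebra.linearMap_apply] at hrw ⊢
  rw [← map_mul, hsar, map_mul, hrw]
  ring

end

theorem stmt10_general (R : Type*) [CommRing R] [IsLocalRing R]
    (hCM : ∃ x ∈ maximalIdeal R, x ∈ nonZeroDivisors R)
    (ω : Submodule R (FractionRing R))
    (hω2 : ω ≤ intCl R (FractionRing R))
    (α : R) (hα : α ∈ maximalIdeal R)
    (hmin : Ideal.span {α} * maximalIdeal R = maximalIdeal R ^ 2)
    (hnotAG : ¬ maxSub R (FractionRing R) * ω ≤ maxSub R (FractionRing R)) :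
    algebraMap R (FractionRing R) α ∉ (1 : Submodule R (FractionRing R)) / ω := by
  intro hcolon
  have hαreg : α ∈ R⁰ := mem_nonZeroDivisors_of_span_singleton_mul_maximalIdeal_eq_sq hCM hmin
  have hαQ : algebraMap R (FractionRing R) α ∈ (FractionRing R)⁰ :=
    (IsLocalization.map_units (FractionRing R) (⟨α, hαreg⟩ : R⁰)).mem_nonZeroDivisors
  exact hnotAG <| maxSub_mul_le_maxSub_of_forall_algebraMap_mul_mem hαQ hmin fun w hw =>
    algebraMap_mul_mem_maxSub_of_mem_one hα (hω2 hw)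
      (Submodule.mem_div_iff_forall_mul_mem.mp hcolon w hw)

/-- Lemma `R:omega^2`(3): if `α m = m²` and `R` is not almost
Gorenstein, then `α ∉ R:ω`. -/
theorem stmt10 (R : Type*) [CommRing R] [IsLocalRing R] [IsNoetherianRing R]
    (hdim : ringKrullDim R = 1)
    (hCM : ∃ x ∈ maximalIdeal R, x ∈ nonZeroDivisors R)
    (hres : Infinite (ResidueField R))
    (ω : Submodule R (FractionRing R))
    (hω : IsCanonicalIdeal R (FractionRing R) ω) (hω1 : 1 ≤ ω)
    (hω2 : ω ≤ intCl R (FractionRing R))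
    (α : R) (hα : α ∈ maximalIdeal R)
    (hmin : Ideal.span {α} * maximalIdeal R = maximalIdeal R ^ 2)
    (hnotAG : ¬ maxSub R (FractionRing R) * ω ≤ maxSub R (FractionRing R)) :
    algebraMap R (FractionRing R) α ∉ (1 : Submodule R (FractionRing R)) / ω :=
  stmt10_general R hCM ω hω2 α hα hmin hnotAG
end
end
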